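/- Let (V₀, ω₀), (V₁, ω₁), (V₂, ω₂) be symplectic vector spaces, Λ₀₁ ⊆ V₀ × V₁ a Lagrangian subspace for (−ω₀) ⊕ ω₁, and Λ₁₂ ⊆ V₁ × V₂ a Lagrangian subspace for (−ω₁) ⊕ ω₂. Then the projection π₀₂ is injective on the fiber product Λ₀₁ ×_{V₁} Λ₁₂ if and only if the transversality condition (Λ₀₁ × Λ₁₂) + K = V₀ × V₁ × V₁ × V₂ holds. -/
import Mathlib


open LinearMap Submodule

/-- The symplectic complement of a subspace `W` with respect to a bilinear form `ω`. -/
def symplComp {V : Type*} [AddCommGroup V] [Module ℝ V]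
    (ω : V →ₗ[ℝ] V →ₗ[ℝ] ℝ) (W : Submodule ℝ V) : Submodule ℝ V where
  carrier := {v | ∀ w ∈ W, ω v w = 0}
  zero_mem' := by intro w _; simp
  add_mem' := by intro a b ha hb w hw; simp [ha w hw, hb w hw]
  smul_mem' := by intro c a ha w hw; simp [ha w hw]

/-- `ω` is a (linear) symplectic form: alternating and nondegenerate. -/
structure IsSymplecticForm {V : Type*} [AddCommGroup V] [Module ℝ V]
    (ω : V →ₗ[ℝ] V →ₗ[ℝ] ℝ) : Prop where
  alternating : ∀ v, ω v v = 0
  nondeg : ∀ v, (∀ w, ω v w = 0) → v = 0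

/-- A subspace is Lagrangian iff it equals its symplectic complement. -/
def IsLagrangian {V : Type*} [AddCommGroup V] [Module ℝ V]
    (ω : V →ₗ[ℝ] V →ₗ[ℝ] ℝ) (Λ : Submodule ℝ V) : Prop :=
  Λ = symplComp ω Λ

/-- The symplectic form `(−ω₀) ⊕ ω₁` on `V₀ × V₁`. -/
def prodFormNegPos {V₀ V₁ : Type*} [AddCommGroup V₀] [Module ℝ V₀]
    [AddCommGroup V₁] [Module ℝ V₁]
    (ω₀ : V₀ →ₗ[ℝ] V₀ →ₗ[ℝ] ℝ) (ω₁ : V₁ →ₗ[ℝ] V₁ →ₗ[ℝ] ℝ) :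
    (V₀ × V₁) →ₗ[ℝ] (V₀ × V₁) →ₗ[ℝ] ℝ :=
  LinearMap.mk₂ ℝ (fun x y => - ω₀ x.1 y.1 + ω₁ x.2 y.2)
    (by intro x x' y
        simp only [Prod.fst_add, Prod.snd_add, map_add, LinearMap.add_apply]; ring)
    (by intro c x y
        simp only [Prod.smul_fst, Prod.smul_snd, map_smul, LinearMap.smul_apply,
          smul_eq_mul]; ring)
    (by intro x y y'
        simp only [Prod.fst_add, Prod.snd_add, map_add, LinearMap.add_apply]; ring)
    (by intro c x y
        simp only [Prod.smul_fst, Prod.smul_snd, map_smul, LinearMap.smul_apply,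
          smul_eq_mul]; ring)

/-- The symplectic form `ω₀₁₁₂ = (−ω₀) ⊕ ω₁ ⊕ (−ω₁) ⊕ ω₂` on `(V₀ × V₁) × (V₁ × V₂)`. -/
def form0112 {V₀ V₁ V₂ : Type*} [AddCommGroup V₀] [Module ℝ V₀]
    [AddCommGroup V₁] [Module ℝ V₁] [AddCommGroup V₂] [Module ℝ V₂]
    (ω₀ : V₀ →ₗ[ℝ] V₀ →ₗ[ℝ] ℝ) (ω₁ : V₁ →ₗ[ℝ] V₁ →ₗ[ℝ] ℝ)
    (ω₂ : V₂ →ₗ[ℝ] V₂ →ₗ[ℝ] ℝ) :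
    ((V₀ × V₁) × (V₁ × V₂)) →ₗ[ℝ] ((V₀ × V₁) × (V₁ × V₂)) →ₗ[ℝ] ℝ :=
  LinearMap.mk₂ ℝ
    (fun x y => - ω₀ x.1.1 y.1.1 + ω₁ x.1.2 y.1.2 - ω₁ x.2.1 y.2.1 + ω₂ x.2.2 y.2.2)
    (by intro x x' y
        simp only [Prod.fst_add, Prod.snd_add, map_add, LinearMap.add_apply]; ring)
    (by intro c x y
        simp only [Prod.smul_fst, Prod.smul_snd, map_smul, LinearMap.smul_apply,
          smul_eq_mul]; ring)
    (by intro x y y'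
        simp only [Prod.fst_add, Prod.snd_add, map_add, LinearMap.add_apply]; ring)
    (by intro c x y
        simp only [Prod.smul_fst, Prod.smul_snd, map_smul, LinearMap.smul_apply,
          smul_eq_mul]; ring)

/-- `K = V₀ × Δ₁ × V₂`, the product of the full spaces with the diagonal of `V₁`. -/
def Kdiag {V₀ V₁ V₂ : Type*} [AddCommGroup V₀] [Module ℝ V₀]
    [AddCommGroup V₁] [Module ℝ V₁] [AddCommGroup V₂] [Module ℝ V₂] :
    Submodule ℝ ((V₀ × V₁) × (V₁ × V₂)) where
  carrier := {x | x.1.2 = x.2.1}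
  zero_mem' := rfl
  add_mem' := by
    intro a b ha hb
    simp only [Set.mem_setOf_eq] at ha hb ⊢
    show a.1.2 + b.1.2 = a.2.1 + b.2.1
    rw [ha, hb]
  smul_mem' := by
    intro c a ha
    simp only [Set.mem_setOf_eq] at ha ⊢
    show c • a.1.2 = c • a.2.1
    rw [ha]

/-- The projection `π₀₂ : V₀ × V₁ × V₁ × V₂ → V₀ × V₂` onto the outer factors. -/
def proj02 {V₀ V₁ V₂ : Type*} [AddCommGroup V₀] [Module ℝ V₀]
    [AddCommGroup V₁] [Module ℝ V₁] [AddCommGroup V₂] [Module ℝ V₂] :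
    ((V₀ × V₁) × (V₁ × V₂)) →ₗ[ℝ] V₀ × V₂ where
  toFun x := (x.1.1, x.2.2)
  map_add' _ _ := rfl
  map_smul' _ _ := rfl


section Aux

variable {V : Type*} [AddCommGroup V] [Module ℝ V]

lemma mem_symplComp {ω : V →ₗ[ℝ] V →ₗ[ℝ] ℝ} {W : Submodule ℝ V} {v : V} :
    v ∈ symplComp ω W ↔ ∀ w ∈ W, ω v w = 0 := Iff.rfl

lemma symplComp_eq_bot_imp_top [FiniteDimensional ℝ V]
    (ω : V →ₗ[ℝ] V →ₗ[ℝ] ℝ) (W : Submodule ℝ V)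
    (h : symplComp ω W = ⊥) : W = ⊤ := by
  set f : V →ₗ[ℝ] (W →ₗ[ℝ] ℝ) := (LinearMap.domRestrict' W).comp ω with hf
  have hker : LinearMap.ker f = ⊥ := by
    rw [← h]
    ext v
    simp only [LinearMap.mem_ker, hf, LinearMap.comp_apply, mem_symplComp]
    constructor
    · intro hv w hw
      have := congrArg (fun g => g ⟨w, hw⟩) hv
      simpa using this
    · intro hv
      ext w
      simpa using hv w w.2
  have hinj : Function.Injective f := LinearMap.ker_eq_bot.mp hker
  have h1 : Module.finrank ℝ V ≤ Module.finrank ℝ (W →ₗ[ℝ] ℝ) :=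
    LinearMap.finrank_le_finrank_of_injective hinj
  have h2 : Module.finrank ℝ (W →ₗ[ℝ] ℝ) = Module.finrank ℝ W :=
    Subspace.dual_finrank_eq
  exact Submodule.eq_top_of_finrank_eq
    (le_antisymm (Submodule.finrank_le W) (h2 ▸ h1))

end Aux

section MainAux

variable {V₀ V₁ V₂ : Type*}
    [AddCommGroup V₀] [Module ℝ V₀]
    [AddCommGroup V₁] [Module ℝ V₁]
    [AddCommGroup V₂] [Module ℝ V₂]
    (ω₀ : V₀ →ₗ[ℝ] V₀ →ₗ[ℝ] ℝ) (ω₁ : V₁ →ₗ[ℝ] V₁ →ₗ[ℝ] ℝ) (ω₂ : V₂ →ₗ[ℝ] V₂ →ₗ[ℝ] ℝ)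

lemma form0112_apply (x y : (V₀ × V₁) × (V₁ × V₂)) :
    form0112 ω₀ ω₁ ω₂ x y =
      - ω₀ x.1.1 y.1.1 + ω₁ x.1.2 y.1.2 - ω₁ x.2.1 y.2.1 + ω₂ x.2.2 y.2.2 := rfl

lemma prodFormNegPos_apply (x y : V₀ × V₁) :
    prodFormNegPos ω₀ ω₁ x y = - ω₀ x.1 y.1 + ω₁ x.2 y.2 := rfl

lemma form0112_eq_prod (x y : (V₀ × V₁) × (V₁ × V₂)) :
    form0112 ω₀ ω₁ ω₂ x y =
      prodFormNegPos ω₀ ω₁ x.1 y.1 + prodFormNegPos ω₁ ω₂ x.2 y.2 := by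
  simp only [form0112_apply, prodFormNegPos_apply]; ring

lemma mem_Kdiag {x : (V₀ × V₁) × (V₁ × V₂)} :
    x ∈ (Kdiag : Submodule ℝ ((V₀ × V₁) × (V₁ × V₂))) ↔ x.1.2 = x.2.1 :=
  Iff.rfl

end MainAux


theorem statement4 {V₀ V₁ V₂ : Type*}
    [AddCommGroup V₀] [Module ℝ V₀] [FiniteDimensional ℝ V₀]
    [AddCommGroup V₁] [Module ℝ V₁] [FiniteDimensional ℝ V₁]
    [AddCommGroup V₂] [Module ℝ V₂] [FiniteDimensional ℝ V₂]
    (ω₀ : V₀ →ₗ[ℝ] V₀ →ₗ[ℝ] ℝ) (ω₁ : V₁ →ₗ[ℝ] V₁ →ₗ[ℝ] ℝ) (ω₂ : V₂ →ₗ[ℝ] V₂ →ₗ[ℝ] ℝ)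
    (hω₀ : IsSymplecticForm ω₀) (hω₁ : IsSymplecticForm ω₁) (hω₂ : IsSymplecticForm ω₂)
    (Λ₀₁ : Submodule ℝ (V₀ × V₁)) (Λ₁₂ : Submodule ℝ (V₁ × V₂))
    (hΛ₀₁ : IsLagrangian (prodFormNegPos ω₀ ω₁) Λ₀₁)
    (hΛ₁₂ : IsLagrangian (prodFormNegPos ω₁ ω₂) Λ₁₂) :
    Set.InjOn (⇑proj02) ((Λ₀₁.prod Λ₁₂ ⊓ Kdiag : Submodule ℝ ((V₀ × V₁) × (V₁ × V₂))) : Set ((V₀ × V₁) × (V₁ × V₂)))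
      ↔ Λ₀₁.prod Λ₁₂ ⊔ Kdiag = ⊤ := by
  set Ω := form0112 ω₀ ω₁ ω₂ with hΩ
  constructor
  · -- injectivity ⇒ transversality
    intro hinj
    apply symplComp_eq_bot_imp_top Ω
    rw [eq_bot_iff]
    intro x hx
    have hxK : ∀ w ∈ (Kdiag : Submodule ℝ ((V₀ × V₁) × (V₁ × V₂))), Ω x w = 0 :=
      fun w hw => hx w (Submodule.mem_sup_right hw)
    have hxΛ : ∀ w ∈ Λ₀₁.prod Λ₁₂, Ω x w = 0 :=
      fun w hw => hx w (Submodule.mem_sup_left hw)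
    have h11 : x.1.1 = 0 := by
      apply hω₀.nondeg
      intro y₀
      have := hxK ((y₀, 0), (0, 0)) rfl
      simp only [hΩ, form0112_apply, map_zero, LinearMap.zero_apply] at this
      linarith
    have h22 : x.2.2 = 0 := by
      apply hω₂.nondeg
      intro y₂
      have := hxK ((0, 0), (0, y₂)) rfl
      simp only [hΩ, form0112_apply, map_zero, LinearMap.zero_apply] at this
      linarith
    have h12 : x.1.2 = x.2.1 := by
      rw [← sub_eq_zero]
      apply hω₁.nondeg
      intro b
      have := hxK ((0, b), (b, 0)) rfl
      simp only [hΩ, form0112_apply, map_zero, LinearMap.zero_apply] at this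
      simp only [map_sub, LinearMap.sub_apply]
      linarith
    have hx1 : x.1 ∈ Λ₀₁ := by
      rw [hΛ₀₁]
      intro a ha
      have := hxΛ (a, 0) ⟨ha, Submodule.zero_mem _⟩
      simp only [hΩ, form0112_eq_prod, prodFormNegPos_apply, map_zero,
        LinearMap.zero_apply] at this ⊢
      linarith
    have hx2 : x.2 ∈ Λ₁₂ := by
      rw [hΛ₁₂]
      intro a ha
      have := hxΛ (0, a) ⟨Submodule.zero_mem _, ha⟩
      simp only [hΩ, form0112_eq_prod, prodFormNegPos_apply, map_zero,
        LinearMap.zero_apply] at this ⊢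
      linarith
    have hxS : x ∈ (Λ₀₁.prod Λ₁₂ ⊓ Kdiag : Submodule ℝ ((V₀ × V₁) × (V₁ × V₂))) :=
      ⟨⟨hx1, hx2⟩, h12⟩
    have h0S : (0 : (V₀ × V₁) × (V₁ × V₂)) ∈
        (Λ₀₁.prod Λ₁₂ ⊓ Kdiag : Submodule ℝ ((V₀ × V₁) × (V₁ × V₂))) :=
      Submodule.zero_mem _
    have : x = 0 := by
      apply hinj hxS h0S
      show (x.1.1, x.2.2) = ((0 : (V₀ × V₁) × (V₁ × V₂)).1.1, (0 : (V₀ × V₁) × (V₁ × V₂)).2.2)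
      rw [h11, h22]
      rfl
    simp [this]
  · -- transversality ⇒ injectivity
    intro htop x hx y hy hxy
    rw [← sub_eq_zero]
    set z := x - y with hz
    have hzS : z ∈ (Λ₀₁.prod Λ₁₂ ⊓ Kdiag : Submodule ℝ ((V₀ × V₁) × (V₁ × V₂))) :=
      Submodule.sub_mem _ hx hy
    obtain ⟨⟨hz1, hz2⟩, hzK⟩ := hzS
    have hproj : proj02 z = 0 := by
      show proj02 (x - y) = 0
      rw [map_sub, hxy, sub_self]
    have h11 : z.1.1 = 0 := congrArg Prod.fst hproj
    have h22 : z.2.2 = 0 := congrArg Prod.snd hproj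
    have hz12 : z.1.2 = z.2.1 := hzK
    have hall : ∀ w, Ω z w = 0 := by
      intro w
      have hw : w ∈ Λ₀₁.prod Λ₁₂ ⊔ (Kdiag : Submodule ℝ ((V₀ × V₁) × (V₁ × V₂))) := by
        rw [htop]; trivial
      obtain ⟨u, hu, k, hk, rfl⟩ := Submodule.mem_sup.mp hw
      rw [map_add]
      have hΛu : Ω z u = 0 := by
        rw [hΩ, form0112_eq_prod]
        have e1 : prodFormNegPos ω₀ ω₁ z.1 u.1 = 0 := by
          have := hΛ₀₁ ▸ hz1
          exact this u.1 hu.1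
        have e2 : prodFormNegPos ω₁ ω₂ z.2 u.2 = 0 := by
          have := hΛ₁₂ ▸ hz2
          exact this u.2 hu.2
        rw [e1, e2, add_zero]
      have hKk : Ω z k = 0 := by
        rw [hΩ, form0112_apply, h11, h22, hz12, (mem_Kdiag.mp hk : k.1.2 = k.2.1)]
        simp
      rw [hΛu, hKk, add_zero]
    have hb : z.1.2 = 0 := by
      apply hω₁.nondeg
      intro b
      have := hall ((0, b), (0, 0))
      simp only [hΩ, form0112_apply, map_zero, LinearMap.zero_apply] at this
      linarith
    have : z = 0 := by
      have h21 : z.2.1 = 0 := hz12 ▸ hb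
      ext
      · exact h11
      · exact hb
      · exact h21
      · exact h22
    exact this
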